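/- arXiv:2602.01357 — 9 statements merged into one kernel-verified Lean document; each statement's English description precedes it below -/
import Mathlib

section
/- Let Y be a finite set, let π be a probability distribution on Y, let r : Y → ℝ with |r(y)| ≤ R for all y, and let η > 0. Define π'(y) = π(y)·exp(η·r(y)) / Z where Z = Σ_y π(y)·exp(η·r(y)). Then the KL divergence satisfies D_KL(π' ‖ π) ≤ (1/2)·η²·R². -/
lemma kl_aux {Y : Type*} [Fintype Y] [Nonempty Y]
    (π : Y → ℝ) (hπpos : ∀ y, 0 < π y) (hπsum : ∑ y, π y = 1)
    (r : Y → ℝ) (R : ℝ) (hr : ∀ y, |r y| ≤ R)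
    (η : ℝ) (hη : 0 < η) :
    η * ((∑ y, π y * r y * Real.exp (η * r y)) / (∑ y, π y * Real.exp (η * r y)))
      - Real.log (∑ y, π y * Real.exp (η * r y)) ≤ 1 / 2 * η ^ 2 * R ^ 2 := by
  set S : ℝ → ℝ := fun t => ∑ y, π y * Real.exp (t * r y) with hSdef
  set S1 : ℝ → ℝ := fun t => ∑ y, π y * r y * Real.exp (t * r y) with hS1def
  set S2 : ℝ → ℝ := fun t => ∑ y, π y * r y ^ 2 * Real.exp (t * r y) with hS2def
  have hSpos : ∀ t, 0 < S t := fun t =>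
    Finset.sum_pos (fun y _ => mul_pos (hπpos y) (Real.exp_pos _)) Finset.univ_nonempty
  have hSd : ∀ t, HasDerivAt S (S1 t) t := by
    intro t
    have : ∀ y ∈ Finset.univ, HasDerivAt (fun t => π y * Real.exp (t * r y))
        (π y * r y * Real.exp (t * r y)) t := by
      intro y _
      have h1 : HasDerivAt (fun t : ℝ => t * r y) (r y) t := hasDerivAt_mul_const (r y)
      have h2 := h1.exp
      have h3 := h2.const_mul (π y)
      exact h3.congr_deriv (by ring)
    simpa using HasDerivAt.fun_sum this
  have hS1d : ∀ t, HasDerivAt S1 (S2 t) t := by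
    intro t
    have : ∀ y ∈ Finset.univ, HasDerivAt (fun t => π y * r y * Real.exp (t * r y))
        (π y * r y ^ 2 * Real.exp (t * r y)) t := by
      intro y _
      have h1 : HasDerivAt (fun t : ℝ => t * r y) (r y) t := hasDerivAt_mul_const (r y)
      have h2 := h1.exp
      have h3 := h2.const_mul (π y * r y)
      exact h3.congr_deriv (by ring)
    simpa using HasDerivAt.fun_sum this
  set B : ℝ → ℝ := fun t => S1 t / S t with hBdef
  have hBd : ∀ t, HasDerivAt B ((S2 t * S t - S1 t * S1 t) / (S t) ^ 2) t := by
    intro t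
    exact (hS1d t).div (hSd t) (ne_of_gt (hSpos t))
  have hS2le : ∀ t, S2 t ≤ R ^ 2 * S t := by
    intro t
    rw [hS2def, hSdef, Finset.mul_sum]
    apply Finset.sum_le_sum
    intro y _
    have hry : r y ^ 2 ≤ R ^ 2 := sq_le_sq' (abs_le.mp (hr y)).1 (abs_le.mp (hr y)).2
    nlinarith [mul_le_mul_of_nonneg_right hry (mul_nonneg (hπpos y).le (Real.exp_pos (t * r y)).le)]
  have hBderiv_le : ∀ t, (S2 t * S t - S1 t * S1 t) / (S t) ^ 2 ≤ R ^ 2 := by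
    intro t
    rw [div_le_iff₀ (pow_pos (hSpos t) 2)]
    nlinarith [hS2le t, hSpos t, sq_nonneg (S1 t)]
  -- B is Lipschitz from above: B η - B t ≤ R² (η - t) for t ≤ η
  set C : ℝ → ℝ := fun t => R ^ 2 * t - B t with hCdef
  have hCd : ∀ t, HasDerivAt C (R ^ 2 - (S2 t * S t - S1 t * S1 t) / (S t) ^ 2) t := by
    intro t
    have h := ((hasDerivAt_id t).const_mul (R ^ 2)).sub (hBd t)
    exact h.congr_deriv (by ring)
  have hCmono : Monotone C := by
    apply monotone_of_deriv_nonneg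
    · exact fun t => (hCd t).differentiableAt
    · intro t
      rw [(hCd t).deriv]
      linarith [hBderiv_le t]
  have hBlip : ∀ t, t ≤ η → B η - B t ≤ R ^ 2 * (η - t) := by
    intro t ht
    have h := hCmono ht
    simp only [hCdef] at h
    linarith
  set A : ℝ → ℝ := fun t => Real.log (S t) with hAdef
  have hAd : ∀ t, HasDerivAt A (S1 t / S t) t := fun t => (hSd t).log (ne_of_gt (hSpos t))
  set ψ : ℝ → ℝ := fun t => A t - t * B η + R ^ 2 * (η * t - t ^ 2 / 2) with hψdef
  have hψd : ∀ t, HasDerivAt ψ (B t - B η + R ^ 2 * (η - t)) t := by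
    intro t
    have h1 : HasDerivAt (fun t : ℝ => t * B η) (B η) t := hasDerivAt_mul_const _
    have h3 : HasDerivAt (fun t : ℝ => η * t - t ^ 2 / 2) (η - t) t := by
      have h4 := ((hasDerivAt_id t).const_mul η).sub ((hasDerivAt_pow 2 t).div_const 2)
      exact h4.congr_deriv (by ring)
    exact ((hAd t).sub h1).add (h3.const_mul _)
  have hmono : MonotoneOn ψ (Set.Icc 0 η) := by
    apply monotoneOn_of_deriv_nonneg (convex_Icc 0 η)
    · exact fun t _ => (hψd t).differentiableAt.continuousAt.continuousWithinAt
    · exact fun t ht => (hψd t).differentiableAt.differentiableWithinAt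
    · intro t ht
      rw [interior_Icc] at ht
      rw [(hψd t).deriv]
      linarith [hBlip t ht.2.le]
  have h0 : ψ 0 = 0 := by
    simp [hψdef, hAdef, hSdef, hπsum]
  have hend := hmono (Set.left_mem_Icc.mpr hη.le) (Set.right_mem_Icc.mpr hη.le) hη.le
  rw [h0] at hend
  simp only [hψdef, hAdef, hBdef] at hend
  nlinarith [hend]

theorem kl_tilted_bound {Y : Type*} [Fintype Y] [Nonempty Y]
    (π : Y → ℝ) (hπpos : ∀ y, 0 < π y) (hπsum : ∑ y, π y = 1)
    (r : Y → ℝ) (R : ℝ) (hr : ∀ y, |r y| ≤ R)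
    (η : ℝ) (hη : 0 < η)
    (Z : ℝ) (hZ : Z = ∑ y, π y * Real.exp (η * r y))
    (π' : Y → ℝ) (hπ' : ∀ y, π' y = π y * Real.exp (η * r y) / Z) :
    ∑ y, π' y * Real.log (π' y / π y) ≤ (1 / 2) * η ^ 2 * R ^ 2 := by
  have hZpos : 0 < Z := by
    rw [hZ]
    exact Finset.sum_pos (fun y _ => mul_pos (hπpos y) (Real.exp_pos _)) Finset.univ_nonempty
  have hsum1 : ∑ y, π' y = 1 := by
    simp only [hπ']
    rw [← Finset.sum_div, ← hZ, div_self hZpos.ne']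
  have hlog : ∀ y, Real.log (π' y / π y) = η * r y - Real.log Z := by
    intro y
    rw [hπ']
    have h : π y * Real.exp (η * r y) / Z / π y = Real.exp (η * r y) / Z := by
      rw [div_div, mul_comm Z (π y), ← div_div, mul_div_cancel_left₀ _ (hπpos y).ne']
    rw [h, Real.log_div (Real.exp_ne_zero _) hZpos.ne', Real.log_exp]
  have e2 : ∑ y, π' y * (η * r y) = η * ((∑ y, π y * r y * Real.exp (η * r y)) / Z) := by
    have h : ∀ y, π' y * (η * r y) = η * (π y * r y * Real.exp (η * r y)) / Z := fun y => by
      rw [hπ']; ring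
    rw [Finset.sum_congr rfl fun y _ => h y, ← Finset.sum_div, ← Finset.mul_sum, mul_div_assoc]
  calc ∑ y, π' y * Real.log (π' y / π y)
      = ∑ y, π' y * (η * r y) - (∑ y, π' y) * Real.log Z := by
        simp only [hlog, mul_sub]
        rw [Finset.sum_sub_distrib, ← Finset.sum_mul]
    _ = η * ((∑ y, π y * r y * Real.exp (η * r y)) / (∑ y, π y * Real.exp (η * r y)))
        - Real.log (∑ y, π y * Real.exp (η * r y)) := by
        rw [hsum1, one_mul, e2, ← hZ]
    _ ≤ 1 / 2 * η ^ 2 * R ^ 2 := kl_aux π hπpos hπsum r R hr η hη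
    _ = (1 / 2) * η ^ 2 * R ^ 2 := by ring
end

section
/- Let Y be a finite set, π*, π, π' probability distributions on Y (all with full support), r : Y → ℝ bounded by R (i.e., |r(y)| ≤ R), and η > 0, with π'(y) ∝ π(y)·exp(η·r(y)). Then Σ_y r(y)·(π*(y) − π(y)) ≤ (η·R²)/2 + η⁻¹·(D_KL(π* ‖ π) − D_KL(π* ‖ π')). -/
open Finset Set

lemma mgf_bound {Y : Type*} [Fintype Y] [Nonempty Y]
    (π : Y → ℝ) (hπ_pos : ∀ y, 0 < π y) (hπ_sum : ∑ y, π y = 1)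
    (r : Y → ℝ) (R : ℝ) (hr : ∀ y, |r y| ≤ R) (η : ℝ) (hη : 0 ≤ η) :
    Real.log (∑ y, π y * Real.exp (η * r y)) ≤
      η * (∑ y, π y * r y) + η ^ 2 * R ^ 2 / 2 := by
  set g : ℝ → ℝ := fun t => ∑ y, π y * Real.exp (t * r y) with hgdef
  set g1 : ℝ → ℝ := fun t => ∑ y, π y * (Real.exp (t * r y) * r y) with hg1def
  set g2 : ℝ → ℝ := fun t => ∑ y, π y * (Real.exp (t * r y) * r y * r y) with hg2def
  set μ : ℝ := ∑ y, π y * r y with hμdef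
  have hgpos : ∀ t, 0 < g t := fun t =>
    Finset.sum_pos (fun y _ => mul_pos (hπ_pos y) (Real.exp_pos _)) Finset.univ_nonempty
  have hg : ∀ t, HasDerivAt g (g1 t) t := by
    intro t
    apply HasDerivAt.fun_sum
    intro y _
    exact ((hasDerivAt_mul_const (r y)).exp).const_mul (π y)
  have hg1 : ∀ t, HasDerivAt g1 (g2 t) t := by
    intro t
    apply HasDerivAt.fun_sum
    intro y _
    exact (((hasDerivAt_mul_const (r y)).exp).mul_const (r y)).const_mul (π y)
  have hg0 : g 0 = 1 := by simp [hgdef, hπ_sum]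
  have hg10 : g1 0 = μ := by simp [hg1def, hμdef]
  have hg2le : ∀ t, g2 t ≤ R ^ 2 * g t := by
    intro t
    rw [hg2def, hgdef, Finset.mul_sum]
    apply Finset.sum_le_sum
    intro y _
    have h1 : r y * r y ≤ R ^ 2 := by
      have := abs_le.mp (hr y)
      nlinarith
    have h2 : (0:ℝ) < Real.exp (t * r y) := Real.exp_pos _
    have h3 := hπ_pos y
    calc π y * (Real.exp (t * r y) * r y * r y)
        = (π y * Real.exp (t * r y)) * (r y * r y) := by ring
      _ ≤ (π y * Real.exp (t * r y)) * R ^ 2 := by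
          exact mul_le_mul_of_nonneg_left h1 (by positivity)
      _ = R ^ 2 * (π y * Real.exp (t * r y)) := by ring
  -- φ t = g1 t / g t - R^2 * t is antitone on [0, ∞)
  set φ : ℝ → ℝ := fun t => g1 t / g t - R ^ 2 * t with hφdef
  have hφ : ∀ t, HasDerivAt φ ((g2 t * g t - g1 t * g1 t) / (g t) ^ 2 - R ^ 2) t := by
    intro t
    have h1 := (hg1 t).div (hg t) (hgpos t).ne'
    have h2 : HasDerivAt (fun t : ℝ => R ^ 2 * t) (R ^ 2) t := by
      simpa using (hasDerivAt_id t).const_mul (R ^ 2)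
    exact h1.sub h2
  have hφanti : AntitoneOn φ (Set.Ici (0:ℝ)) := by
    apply antitoneOn_of_deriv_nonpos (convex_Ici 0)
    · exact fun t _ => ((hφ t).differentiableAt).continuousAt.continuousWithinAt
    · exact fun t _ => ((hφ t).differentiableAt).differentiableWithinAt
    · intro t _
      rw [(hφ t).deriv]
      have hsq : (0:ℝ) < (g t) ^ 2 := pow_pos (hgpos t) 2
      have h1 : g2 t * g t - g1 t * g1 t ≤ R ^ 2 * (g t) ^ 2 := by
        have := hg2le t
        have hg' := hgpos t
        nlinarith [sq_nonneg (g1 t)]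
      have : (g2 t * g t - g1 t * g1 t) / (g t) ^ 2 ≤ R ^ 2 := by
        rw [div_le_iff₀ hsq]; linarith
      linarith
  have hφbound : ∀ t ∈ Set.Ici (0:ℝ), g1 t / g t ≤ μ + R ^ 2 * t := by
    intro t ht
    have h0 : φ t ≤ φ 0 := hφanti (Set.self_mem_Ici) ht ht
    have : φ 0 = μ := by simp [hφdef, hg0, hg10]
    rw [this] at h0
    simp only [hφdef] at h0
    linarith
  -- ψ t = log g t - μ t - R²/2 t² is antitone on [0, ∞)
  set ψ : ℝ → ℝ := fun t => Real.log (g t) - μ * t - R ^ 2 / 2 * t ^ 2 with hψdef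
  have hψ : ∀ t, HasDerivAt ψ (g1 t / g t - μ - R ^ 2 * t) t := by
    intro t
    have h1 : HasDerivAt (fun t => Real.log (g t)) (g1 t / g t) t :=
      (hg t).log (hgpos t).ne'
    have h2 : HasDerivAt (fun t : ℝ => μ * t) μ t := by
      simpa using (hasDerivAt_id t).const_mul μ
    have h3 : HasDerivAt (fun t : ℝ => R ^ 2 / 2 * t ^ 2) (R ^ 2 * t) t := by
      have := (hasDerivAt_pow 2 t).const_mul (R ^ 2 / 2)
      convert this using 1
      · rfl
      · rfl
      · ring
    exact (h1.sub h2).sub h3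
  have hψanti : AntitoneOn ψ (Set.Ici (0:ℝ)) := by
    apply antitoneOn_of_deriv_nonpos (convex_Ici 0)
    · exact fun t _ => ((hψ t).differentiableAt).continuousAt.continuousWithinAt
    · exact fun t _ => ((hψ t).differentiableAt).differentiableWithinAt
    · intro t ht
      rw [(hψ t).deriv]
      rw [interior_Ici] at ht
      have := hφbound t (Set.mem_Ici.mpr (le_of_lt ht))
      linarith
  have hfinal : ψ η ≤ ψ 0 := hψanti (Set.self_mem_Ici) (Set.mem_Ici.mpr hη) hη
  have hψ0 : ψ 0 = 0 := by simp [hψdef, hg0]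
  rw [hψ0] at hfinal
  simp only [hψdef] at hfinal
  have : Real.log (g η) ≤ μ * η + R ^ 2 / 2 * η ^ 2 := by linarith
  calc Real.log (∑ y, π y * Real.exp (η * r y)) = Real.log (g η) := rfl
    _ ≤ μ * η + R ^ 2 / 2 * η ^ 2 := this
    _ = η * μ + η ^ 2 * R ^ 2 / 2 := by ring

theorem one_step_descent {Y : Type*} [Fintype Y] [Nonempty Y]
    (πs π π' : Y → ℝ)
    (hπs_pos : ∀ y, 0 < πs y) (hπs_sum : ∑ y, πs y = 1)
    (hπ_pos : ∀ y, 0 < π y) (hπ_sum : ∑ y, π y = 1)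
    (r : Y → ℝ) (R : ℝ) (hr : ∀ y, |r y| ≤ R)
    (η : ℝ) (hη : 0 < η)
    (hπ' : ∀ y, π' y = π y * Real.exp (η * r y) / (∑ z, π z * Real.exp (η * r z))) :
    ∑ y, r y * (πs y - π y) ≤
      η * R ^ 2 / 2 +
        η⁻¹ * ((∑ y, πs y * Real.log (πs y / π y)) - ∑ y, πs y * Real.log (πs y / π' y)) := by
  set Z : ℝ := ∑ z, π z * Real.exp (η * r z) with hZdef
  have hZpos : 0 < Z :=
    Finset.sum_pos (fun y _ => mul_pos (hπ_pos y) (Real.exp_pos _)) Finset.univ_nonempty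
  have hπ'_pos : ∀ y, 0 < π' y := by
    intro y; rw [hπ' y]
    exact div_pos (mul_pos (hπ_pos y) (Real.exp_pos _)) hZpos
  -- KL difference identity
  have hlog : ∀ y, πs y * Real.log (πs y / π y) - πs y * Real.log (πs y / π' y)
      = πs y * (η * r y) - πs y * Real.log Z := by
    intro y
    have h1 : Real.log (πs y / π y) = Real.log (πs y) - Real.log (π y) :=
      Real.log_div (hπs_pos y).ne' (hπ_pos y).ne'
    have h2 : Real.log (πs y / π' y) = Real.log (πs y) - Real.log (π' y) :=
      Real.log_div (hπs_pos y).ne' (hπ'_pos y).ne'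
    have h3 : Real.log (π' y) = Real.log (π y) + η * r y - Real.log Z := by
      rw [hπ' y, Real.log_div (mul_pos (hπ_pos y) (Real.exp_pos _)).ne' hZpos.ne',
        Real.log_mul (hπ_pos y).ne' (Real.exp_pos _).ne', Real.log_exp]
    rw [h1, h2, h3]; ring
  have hKL : (∑ y, πs y * Real.log (πs y / π y)) - ∑ y, πs y * Real.log (πs y / π' y)
      = η * (∑ y, πs y * r y) - Real.log Z := by
    rw [← Finset.sum_sub_distrib]
    calc ∑ y, (πs y * Real.log (πs y / π y) - πs y * Real.log (πs y / π' y))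
        = ∑ y, (πs y * (η * r y) - πs y * Real.log Z) :=
          Finset.sum_congr rfl fun y _ => hlog y
      _ = η * (∑ y, πs y * r y) - (∑ y, πs y) * Real.log Z := by
          rw [Finset.sum_sub_distrib, Finset.mul_sum, Finset.sum_mul]
          congr 1
          exact Finset.sum_congr rfl fun y _ => by ring
      _ = η * (∑ y, πs y * r y) - Real.log Z := by rw [hπs_sum, one_mul]
  have hL : ∑ y, r y * (πs y - π y) = (∑ y, πs y * r y) - ∑ y, π y * r y := by
    rw [← Finset.sum_sub_distrib]
    exact Finset.sum_congr rfl fun y _ => by ring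
  have key := mgf_bound π hπ_pos hπ_sum r R hr η hη.le
  have hinv : η⁻¹ * Real.log Z ≤ (∑ y, π y * r y) + η * R ^ 2 / 2 := by
    have h := mul_le_mul_of_nonneg_left key (inv_nonneg.mpr hη.le)
    have he : η⁻¹ * (η * (∑ y, π y * r y) + η ^ 2 * R ^ 2 / 2)
        = (∑ y, π y * r y) + η * R ^ 2 / 2 := by
      field_simp
    linarith [he ▸ h]
  rw [hKL, hL]
  have he2 : η⁻¹ * (η * (∑ y, πs y * r y) - Real.log Z)
      = (∑ y, πs y * r y) - η⁻¹ * Real.log Z := by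
    field_simp
  rw [he2]
  linarith
end

section
/- Let Y be a finite set, p and q probability mass functions on Y with p(y) + q(y) > 0 for all y, and c > 0. Then the supremum over all functions r : Y → ℝ of Σ_y p(y)·r(y) − Σ_y q(y)·r(y) − (c/2)·(Σ_y p(y)·r(y)² + Σ_y q(y)·r(y)²) is attained at r*(y) = (1/c)·(p(y) − q(y))/(p(y) + q(y)), and the supremum value equals (1/(2c))·Σ_y (p(y) − q(y))²/(p(y) + q(y)). -/
theorem mixed_chi2_variational {Y : Type*} [Fintype Y] [Nonempty Y]
    (p q : Y → ℝ)
    (hp_nonneg : ∀ y, 0 ≤ p y) (hp_sum : ∑ y, p y = 1)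
    (hq_nonneg : ∀ y, 0 ≤ q y) (hq_sum : ∑ y, q y = 1)
    (hpq : ∀ y, 0 < p y + q y)
    (c : ℝ) (hc : 0 < c)
    (J : (Y → ℝ) → ℝ)
    (hJ : ∀ r, J r = (∑ y, p y * r y) - (∑ y, q y * r y)
      - c / 2 * ((∑ y, p y * r y ^ 2) + ∑ y, q y * r y ^ 2))
    (rstar : Y → ℝ) (hrstar : ∀ y, rstar y = (1 / c) * (p y - q y) / (p y + q y)) :
    (∀ r : Y → ℝ, J r ≤ J rstar) ∧
      J rstar = (1 / (2 * c)) * ∑ y, (p y - q y) ^ 2 / (p y + q y) := by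
  have key : ∀ r : Y → ℝ, J r
      = ∑ y, ((p y - q y) * r y - c / 2 * (p y + q y) * r y ^ 2) := by
    intro r
    rw [hJ]
    rw [← Finset.sum_sub_distrib, ← Finset.sum_add_distrib, Finset.mul_sum,
      ← Finset.sum_sub_distrib]
    exact Finset.sum_congr rfl fun y _ => by ring
  have hval : J rstar = (1 / (2 * c)) * ∑ y, (p y - q y) ^ 2 / (p y + q y) := by
    rw [key, Finset.mul_sum]
    refine Finset.sum_congr rfl fun y _ => ?_
    rw [hrstar y]
    have h1 : p y + q y ≠ 0 := (hpq y).ne'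
    have h2 : c ≠ 0 := hc.ne'
    field_simp
    ring
  refine ⟨fun r => ?_, hval⟩
  rw [key, key]
  refine Finset.sum_le_sum fun y _ => ?_
  have h1 : 0 < p y + q y := hpq y
  have h2 : rstar y = (1 / c) * (p y - q y) / (p y + q y) := hrstar y
  have hsq : 0 ≤ (r y - rstar y) ^ 2 := sq_nonneg _
  have h3 : c * ((p y + q y) * rstar y) = p y - q y := by
    rw [h2]; field_simp
  rw [← h3]
  nlinarith [mul_nonneg (mul_nonneg hc.le h1.le) hsq]
end

section
/- Let Y be a finite set, p and q probability mass functions on Y with p(y) + q(y) > 0 for all y, and c > 0. Then the supremum over all r : Y → ℝ of E_p[r] − E_q[r] − (c/2)·(E_p[r²] + E_q[r²]) is bounded above by 1/c. -/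
theorem mixed_chi2_variational_bound {Y : Type*} [Fintype Y] [Nonempty Y]
    (p q : Y → ℝ)
    (hp_nonneg : ∀ y, 0 ≤ p y) (hp_sum : ∑ y, p y = 1)
    (hq_nonneg : ∀ y, 0 ≤ q y) (hq_sum : ∑ y, q y = 1)
    (hpq : ∀ y, 0 < p y + q y)
    (c : ℝ) (hc : 0 < c) :
    ∀ r : Y → ℝ,
      (∑ y, p y * r y) - (∑ y, q y * r y)
        - c / 2 * ((∑ y, p y * r y ^ 2) + ∑ y, q y * r y ^ 2) ≤ 1 / c := by
  intro r
  have key : ∀ y, p y * r y - q y * r y - c / 2 * (p y * r y ^ 2 + q y * r y ^ 2)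
      ≤ (p y + q y) / (2 * c) := by
    intro y
    have hs := hpq y
    have hpq' : 0 ≤ p y * q y := mul_nonneg (hp_nonneg y) (hq_nonneg y)
    rw [le_div_iff₀ (by positivity : (0:ℝ) < 2 * c)]
    nlinarith [sq_nonneg (c * (p y + q y) * r y - (p y - q y)), mul_pos hc hs]
  calc (∑ y, p y * r y) - (∑ y, q y * r y)
        - c / 2 * ((∑ y, p y * r y ^ 2) + ∑ y, q y * r y ^ 2)
      = ∑ y, (p y * r y - q y * r y - c / 2 * (p y * r y ^ 2 + q y * r y ^ 2)) := by
        rw [Finset.sum_sub_distrib, Finset.sum_sub_distrib, ← Finset.mul_sum,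
          ← Finset.sum_add_distrib]
    _ ≤ ∑ y, (p y + q y) / (2 * c) := Finset.sum_le_sum fun y _ => key y
    _ = 1 / c := by
        rw [← Finset.sum_div, Finset.sum_add_distrib, hp_sum, hq_sum]
        ring
end

section
/- Let Y be a finite set, π*, π probability mass functions on Y with full support, β ≥ 1, and set α = 1/β. Define π'(y) = π(y)^{1−α}·π*(y)^{α} / Z with Z = Σ_y π(y)^{1−α}·π*(y)^{α}. Then D_KL(π* ‖ π') ≤ (1 − 1/β)·D_KL(π* ‖ π). -/
theorem kl_contraction_step {Y : Type*} [Fintype Y] [Nonempty Y]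
    (πs π : Y → ℝ)
    (hπs_pos : ∀ y, 0 < πs y) (hπs_sum : ∑ y, πs y = 1)
    (hπ_pos : ∀ y, 0 < π y) (hπ_sum : ∑ y, π y = 1)
    (β : ℝ) (hβ : 1 ≤ β) (α : ℝ) (hα : α = 1 / β)
    (Z : ℝ) (hZ : Z = ∑ y, π y ^ (1 - α) * πs y ^ α)
    (π' : Y → ℝ) (hπ' : ∀ y, π' y = π y ^ (1 - α) * πs y ^ α / Z) :
    ∑ y, πs y * Real.log (πs y / π' y) ≤
      (1 - 1 / β) * ∑ y, πs y * Real.log (πs y / π y) := by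
  have hβ0 : (0:ℝ) < β := lt_of_lt_of_le one_pos hβ
  have hα0 : 0 ≤ α := by rw [hα]; positivity
  have hα1 : α ≤ 1 := by rw [hα]; exact div_le_one_of_le₀ hβ hβ0.le
  have h1α : 0 ≤ 1 - α := by linarith
  have hZpos : 0 < Z := by
    rw [hZ]
    apply Finset.sum_pos
    · intro y _
      exact mul_pos (Real.rpow_pos_of_pos (hπ_pos y) _) (Real.rpow_pos_of_pos (hπs_pos y) _)
    · exact Finset.univ_nonempty
  have hZle : Z ≤ 1 := by
    rw [hZ]
    calc ∑ y, π y ^ (1 - α) * πs y ^ α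
        ≤ ∑ y, ((1 - α) * π y + α * πs y) := by
          apply Finset.sum_le_sum
          intro y _
          exact Real.geom_mean_le_arith_mean2_weighted h1α hα0
            (hπ_pos y).le (hπs_pos y).le (by ring)
      _ = 1 := by
          rw [Finset.sum_add_distrib, ← Finset.mul_sum, ← Finset.mul_sum,
            hπ_sum, hπs_sum]; ring
  have hlogZ : Real.log Z ≤ 0 := Real.log_nonpos hZpos.le hZle
  have key : ∀ y, Real.log (πs y / π' y) =
      Real.log Z + (1 - α) * Real.log (πs y / π y) := by
    intro y
    have hπy := hπ_pos y
    have hπsy := hπs_pos y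
    have hratio : πs y / π' y = Z * (πs y / π y) ^ (1 - α) := by
      rw [hπ', Real.div_rpow hπsy.le hπy.le]
      have h1 : (0:ℝ) < π y ^ (1 - α) := Real.rpow_pos_of_pos hπy _
      have h2 : (0:ℝ) < πs y ^ α := Real.rpow_pos_of_pos hπsy _
      have h3 : πs y = πs y ^ (1 - α) * πs y ^ α := by
        rw [← Real.rpow_add hπsy]; norm_num
      field_simp
      nth_rewrite 1 [h3]
      ring
    rw [hratio, Real.log_mul hZpos.ne' (by positivity),
      Real.log_rpow (by positivity)]
  calc ∑ y, πs y * Real.log (πs y / π' y)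
      = ∑ y, (πs y * Real.log Z + (1 - α) * (πs y * Real.log (πs y / π y))) := by
        apply Finset.sum_congr rfl
        intro y _
        rw [key y]; ring
    _ = Real.log Z + (1 - α) * ∑ y, πs y * Real.log (πs y / π y) := by
        rw [Finset.sum_add_distrib, ← Finset.sum_mul, hπs_sum, ← Finset.mul_sum]
        ring
    _ ≤ (1 - 1/β) * ∑ y, πs y * Real.log (πs y / π y) := by
        rw [← hα]; linarith
end

section
/- Let Y be a finite set, π*, π⁰ probability mass functions on Y with full support, β ≥ 1, α = 1/β, and define recursively π^{k+1}(y) ∝ π^k(y)^{1−α}·π*(y)^{α}. Then for all k ≥ 0, D_KL(π* ‖ π^k) ≤ (1 − 1/β)^k · D_KL(π* ‖ π⁰); in particular if β > 1 then D_KL(π* ‖ π^k) → 0 as k → ∞. -/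
theorem kl_geometric_convergence {Y : Type*} [Fintype Y] [Nonempty Y]
    (πs : Y → ℝ) (hπs_pos : ∀ y, 0 < πs y) (hπs_sum : ∑ y, πs y = 1)
    (π : ℕ → Y → ℝ)
    (hπ0_pos : ∀ y, 0 < π 0 y) (hπ0_sum : ∑ y, π 0 y = 1)
    (β : ℝ) (hβ : 1 ≤ β) (α : ℝ) (hα : α = 1 / β)
    (hrec : ∀ k y, π (k + 1) y =
      π k y ^ (1 - α) * πs y ^ α / (∑ z, π k z ^ (1 - α) * πs z ^ α)) :
    (∀ k : ℕ, ∑ y, πs y * Real.log (πs y / π k y) ≤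
      (1 - 1 / β) ^ k * ∑ y, πs y * Real.log (πs y / π 0 y)) ∧
    (1 < β → Filter.Tendsto (fun k => ∑ y, πs y * Real.log (πs y / π k y))
      Filter.atTop (nhds 0)) := by
  have hβ0 : 0 < β := lt_of_lt_of_le one_pos hβ
  have hα_pos : 0 < α := by rw [hα]; positivity
  have hα_le : α ≤ 1 := by rw [hα]; rw [div_le_one hβ0]; exact hβ
  -- invariant: positivity and normalization
  have hinv : ∀ k, (∀ y, 0 < π k y) ∧ ∑ y, π k y = 1 := by
    intro k
    induction k with
    | zero => exact ⟨hπ0_pos, hπ0_sum⟩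
    | succ k ih =>
      obtain ⟨hpos, hsum⟩ := ih
      have hZpos : 0 < ∑ z, π k z ^ (1 - α) * πs z ^ α :=
        Finset.sum_pos (fun z _ => by
          have := hpos z; have := hπs_pos z; positivity) Finset.univ_nonempty
      constructor
      · intro y
        rw [hrec]
        have := hpos y; have := hπs_pos y
        positivity
      · rw [Finset.sum_congr rfl fun y _ => hrec k y, ← Finset.sum_div,
          div_self hZpos.ne']
  -- Gibbs: KL ≥ 0
  have hD0 : ∀ k, 0 ≤ ∑ y, πs y * Real.log (πs y / π k y) := by
    intro k
    obtain ⟨hpos, hsum⟩ := hinv k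
    have key : ∀ y, πs y - π k y ≤ πs y * Real.log (πs y / π k y) := by
      intro y
      have h1 : Real.log (π k y / πs y) ≤ π k y / πs y - 1 :=
        Real.log_le_sub_one_of_pos (by have := hpos y; have := hπs_pos y; positivity)
      have h2 : Real.log (πs y / π k y) = - Real.log (π k y / πs y) := by
        rw [← Real.log_inv, inv_div]
      have h3 : πs y * (π k y / πs y - 1) = π k y - πs y := by
        rw [mul_sub, mul_one, mul_div_cancel₀ _ (hπs_pos y).ne']
      have h4 := mul_le_mul_of_nonneg_left h1 (hπs_pos y).le
      rw [h3] at h4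
      rw [h2]
      linarith
    calc (0:ℝ) = ∑ y, (πs y - π k y) := by
          rw [Finset.sum_sub_distrib, hsum, hπs_sum]; ring
      _ ≤ _ := Finset.sum_le_sum fun y _ => key y
  -- one-step contraction
  have step : ∀ k, ∑ y, πs y * Real.log (πs y / π (k + 1) y) ≤
      (1 - α) * ∑ y, πs y * Real.log (πs y / π k y) := by
    intro k
    obtain ⟨hpos, hsum⟩ := hinv k
    set Z := ∑ z, π k z ^ (1 - α) * πs z ^ α with hZdef
    have hZpos : 0 < Z :=
      Finset.sum_pos (fun z _ => by
        have := hpos z; have := hπs_pos z; positivity) Finset.univ_nonempty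
    have hZle : Z ≤ 1 := by
      have hb : ∀ z ∈ Finset.univ, π k z ^ (1 - α) * πs z ^ α ≤
          (1 - α) * π k z + α * πs z := fun z _ =>
        Real.geom_mean_le_arith_mean2_weighted (by linarith) hα_pos.le
          (hpos z).le (hπs_pos z).le (by ring)
      calc Z ≤ ∑ z, ((1 - α) * π k z + α * πs z) := Finset.sum_le_sum hb
        _ = 1 := by
          rw [Finset.sum_add_distrib, ← Finset.mul_sum, ← Finset.mul_sum,
            hsum, hπs_sum]; ring
    have hlog : ∀ y, Real.log (πs y / π (k + 1) y) =
        (1 - α) * Real.log (πs y / π k y) + Real.log Z := by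
      intro y
      have hA : (0:ℝ) < π k y ^ (1 - α) * πs y ^ α := by
        have := hpos y; have := hπs_pos y; positivity
      rw [hrec, div_div_eq_mul_div,
        Real.log_div (mul_pos (hπs_pos y) hZpos).ne' hA.ne',
        Real.log_mul (hπs_pos y).ne' hZpos.ne',
        Real.log_mul (Real.rpow_pos_of_pos (hpos y) _).ne'
          (Real.rpow_pos_of_pos (hπs_pos y) _).ne',
        Real.log_rpow (hpos y), Real.log_rpow (hπs_pos y),
        Real.log_div (hπs_pos y).ne' (hpos y).ne']
      ring
    calc ∑ y, πs y * Real.log (πs y / π (k + 1) y)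
        = ∑ y, ((1 - α) * (πs y * Real.log (πs y / π k y)) + πs y * Real.log Z) := by
          refine Finset.sum_congr rfl fun y _ => ?_
          rw [hlog y]; ring
      _ = (1 - α) * (∑ y, πs y * Real.log (πs y / π k y)) + Real.log Z := by
          rw [Finset.sum_add_distrib, ← Finset.mul_sum, ← Finset.sum_mul,
            hπs_sum, one_mul]
      _ ≤ (1 - α) * ∑ y, πs y * Real.log (πs y / π k y) := by
          have := Real.log_nonpos hZpos.le hZle
          linarith
  have hr : (1:ℝ) - 1 / β = 1 - α := by rw [hα]
  have main : ∀ k : ℕ, ∑ y, πs y * Real.log (πs y / π k y) ≤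
      (1 - 1 / β) ^ k * ∑ y, πs y * Real.log (πs y / π 0 y) := by
    intro k
    induction k with
    | zero => simp
    | succ k ih =>
      calc ∑ y, πs y * Real.log (πs y / π (k + 1) y)
          ≤ (1 - α) * ∑ y, πs y * Real.log (πs y / π k y) := step k
        _ ≤ (1 - α) * ((1 - 1 / β) ^ k * ∑ y, πs y * Real.log (πs y / π 0 y)) :=
            mul_le_mul_of_nonneg_left ih (by linarith)
        _ = (1 - 1 / β) ^ (k + 1) * ∑ y, πs y * Real.log (πs y / π 0 y) := by
            rw [hr]; ring
  refine ⟨main, fun hβ1 => ?_⟩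
  have hr0 : (0:ℝ) ≤ 1 - 1 / β := by
    have : 1 / β ≤ 1 := by rw [div_le_one hβ0]; exact hβ
    linarith
  have hr1 : (1:ℝ) - 1 / β < 1 := by
    have : 0 < 1 / β := by positivity
    linarith
  have hlim : Filter.Tendsto
      (fun k => (1 - 1 / β) ^ k * ∑ y, πs y * Real.log (πs y / π 0 y))
      Filter.atTop (nhds 0) := by
    have := (tendsto_pow_atTop_nhds_zero_of_lt_one hr0 hr1).mul_const
      (∑ y, πs y * Real.log (πs y / π 0 y))
    simpa using this
  exact squeeze_zero hD0 main hlim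
end

section
/- Let Y be a finite set, π*, π^k, π^{k+1} full-support probability mass functions on Y, r : Y → ℝ, β > 0, and suppose π^{k+1}(y) = π^k(y)·exp(r(y)/β) / Z_k with Z_k = Σ_y π^k(y)·exp(r(y)/β). Then D_KL(π* ‖ π^{k+1}) = D_KL(π* ‖ π^k) − D_KL(π^{k+1} ‖ π^k) − (1/β)·(E_{π*}[r] − E_{π^{k+1}}[r]). -/
theorem kl_decomposition_identity {Y : Type*} [Fintype Y] [Nonempty Y]
    (πs πk πk1 : Y → ℝ)
    (hπs_pos : ∀ y, 0 < πs y) (hπs_sum : ∑ y, πs y = 1)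
    (hπk_pos : ∀ y, 0 < πk y) (hπk_sum : ∑ y, πk y = 1)
    (hπk1_pos : ∀ y, 0 < πk1 y) (hπk1_sum : ∑ y, πk1 y = 1)
    (r : Y → ℝ) (β : ℝ) (hβ : 0 < β)
    (Zk : ℝ) (hZk : Zk = ∑ y, πk y * Real.exp (r y / β))
    (hπk1 : ∀ y, πk1 y = πk y * Real.exp (r y / β) / Zk) :
    ∑ y, πs y * Real.log (πs y / πk1 y) =
      (∑ y, πs y * Real.log (πs y / πk y))
        - (∑ y, πk1 y * Real.log (πk1 y / πk y))
        - (1 / β) * ((∑ y, πs y * r y) - ∑ y, πk1 y * r y) := by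
  have hZ : 0 < Zk := by
    rw [hZk]
    exact Finset.sum_pos (fun y _ => by have := hπk_pos y; positivity) Finset.univ_nonempty
  have h2 : ∀ y, Real.log (πk1 y / πk y) = r y / β - Real.log Zk := by
    intro y
    have hpk := hπk_pos y
    have : πk1 y / πk y = Real.exp (r y / β) / Zk := by
      rw [hπk1 y]; field_simp
    rw [this, Real.log_div (Real.exp_ne_zero _) (ne_of_gt hZ), Real.log_exp]
  have h1 : ∀ y, Real.log (πs y / πk1 y) =
      Real.log (πs y / πk y) - r y / β + Real.log Zk := by
    intro y
    have hps := hπs_pos y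
    have hpk := hπk_pos y
    have hpk1 := hπk1_pos y
    have : πs y / πk1 y = (πs y / πk y) / (πk1 y / πk y) := by
      field_simp
    rw [this, Real.log_div (by positivity) (by positivity), h2 y]
    ring
  have e1 : ∑ y, πs y * Real.log (πs y / πk1 y)
      = (∑ y, πs y * Real.log (πs y / πk y)) - (1/β) * (∑ y, πs y * r y)
        + Real.log Zk := by
    have : ∀ y ∈ Finset.univ, πs y * Real.log (πs y / πk1 y)
        = πs y * Real.log (πs y / πk y) - (1/β) * (πs y * r y)
          + Real.log Zk * πs y := by
      intro y _
      rw [h1 y]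
      field_simp
    rw [Finset.sum_congr rfl this, Finset.sum_add_distrib, Finset.sum_sub_distrib,
      ← Finset.mul_sum, ← Finset.mul_sum, hπs_sum, mul_one]
  have e2 : ∑ y, πk1 y * Real.log (πk1 y / πk y)
      = (1/β) * (∑ y, πk1 y * r y) - Real.log Zk := by
    have : ∀ y ∈ Finset.univ, πk1 y * Real.log (πk1 y / πk y)
        = (1/β) * (πk1 y * r y) - Real.log Zk * πk1 y := by
      intro y _
      rw [h2 y]
      field_simp
    rw [Finset.sum_congr rfl this, Finset.sum_sub_distrib,
      ← Finset.mul_sum, ← Finset.mul_sum, hπk1_sum, mul_one]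
  rw [e1, e2]
  ring
end

section
/- Let Y be a finite set, π*, π^k full-support probability mass functions on Y, r : Y → ℝ, β > 0, and π^{k+1}(y) ∝ π^k(y)·exp(r(y)/β). If E_{π*}[r] ≥ E_{π^{k+1}}[r], then D_KL(π* ‖ π^{k+1}) ≤ D_KL(π* ‖ π^k) − D_KL(π^{k+1} ‖ π^k). In particular, if π^{k+1} ≠ π^k then D_KL(π* ‖ π^{k+1}) < D_KL(π* ‖ π^k). -/
theorem iterative_dpo_contraction {Y : Type*} [Fintype Y] [Nonempty Y]
    (πs πk πk1 : Y → ℝ)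
    (hπs_pos : ∀ y, 0 < πs y) (hπs_sum : ∑ y, πs y = 1)
    (hπk_pos : ∀ y, 0 < πk y) (hπk_sum : ∑ y, πk y = 1)
    (hπk1_pos : ∀ y, 0 < πk1 y) (hπk1_sum : ∑ y, πk1 y = 1)
    (r : Y → ℝ) (β : ℝ) (hβ : 0 < β)
    (hπk1 : ∀ y, πk1 y = πk y * Real.exp (r y / β) / (∑ z, πk z * Real.exp (r z / β)))
    (hr : (∑ y, πk1 y * r y) ≤ ∑ y, πs y * r y) :
    (∑ y, πs y * Real.log (πs y / πk1 y) ≤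
      (∑ y, πs y * Real.log (πs y / πk y)) - ∑ y, πk1 y * Real.log (πk1 y / πk y)) ∧
    (πk1 ≠ πk →
      ∑ y, πs y * Real.log (πs y / πk1 y) < ∑ y, πs y * Real.log (πs y / πk y)) := by
  set Z : ℝ := ∑ z, πk z * Real.exp (r z / β) with hZ
  have hZpos : 0 < Z :=
    Finset.sum_pos (fun z _ => mul_pos (hπk_pos z) (Real.exp_pos _)) Finset.univ_nonempty
  have key : ∀ y, Real.log (πk1 y) = Real.log (πk y) + r y / β - Real.log Z := by
    intro y
    rw [hπk1 y, Real.log_div (mul_pos (hπk_pos y) (Real.exp_pos _)).ne' hZpos.ne',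
      Real.log_mul (hπk_pos y).ne' (Real.exp_pos _).ne', Real.log_exp]
  have e1 : ∀ y, πs y * Real.log (πs y / πk y) - πs y * Real.log (πs y / πk1 y)
      = πs y * r y / β - πs y * Real.log Z := by
    intro y
    rw [Real.log_div (hπs_pos y).ne' (hπk_pos y).ne',
      Real.log_div (hπs_pos y).ne' (hπk1_pos y).ne', key y]
    ring
  have hBA : (∑ y, πs y * Real.log (πs y / πk y)) - (∑ y, πs y * Real.log (πs y / πk1 y))
      = (∑ y, πs y * r y) / β - Real.log Z := by
    rw [← Finset.sum_sub_distrib]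
    simp_rw [e1]
    rw [Finset.sum_sub_distrib, ← Finset.sum_div, ← Finset.sum_mul, hπs_sum, one_mul]
  have e2 : ∀ y, πk1 y * Real.log (πk1 y / πk y) = πk1 y * r y / β - πk1 y * Real.log Z := by
    intro y
    rw [Real.log_div (hπk1_pos y).ne' (hπk_pos y).ne', key y]
    ring
  have hC : (∑ y, πk1 y * Real.log (πk1 y / πk y)) = (∑ y, πk1 y * r y) / β - Real.log Z := by
    simp_rw [e2]
    rw [Finset.sum_sub_distrib, ← Finset.sum_div, ← Finset.sum_mul, hπk1_sum, one_mul]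
  have hdiv : (∑ y, πk1 y * r y) / β ≤ (∑ y, πs y * r y) / β := by gcongr
  have part1 : ∑ y, πs y * Real.log (πs y / πk1 y) ≤
      (∑ y, πs y * Real.log (πs y / πk y)) - ∑ y, πk1 y * Real.log (πk1 y / πk y) := by
    linarith [hBA, hC, hdiv]
  refine ⟨part1, fun hne => ?_⟩
  -- strict positivity of KL(πk1 ‖ πk)
  have hpt : ∀ y, πk1 y - πk y ≤ πk1 y * Real.log (πk1 y / πk y) := by
    intro y
    have h1 := Real.log_le_sub_one_of_pos (div_pos (hπk_pos y) (hπk1_pos y))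
    have h2 : Real.log (πk1 y / πk y) = - Real.log (πk y / πk1 y) := by
      rw [← Real.log_inv, inv_div]
    have h3 : πk1 y * (πk y / πk1 y) = πk y := by rw [mul_div_assoc']; exact mul_div_cancel_left₀ _ (hπk1_pos y).ne'
    rw [h2]
    nlinarith [mul_le_mul_of_nonneg_left h1 (hπk1_pos y).le]
  obtain ⟨y0, hy0⟩ := Function.ne_iff.mp hne
  have hstrict : πk1 y0 - πk y0 < πk1 y0 * Real.log (πk1 y0 / πk y0) := by
    have hne1 : πk y0 / πk1 y0 ≠ 1 := by
      intro h
      exact hy0 ((div_eq_one_iff_eq (hπk1_pos y0).ne').mp h).symm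
    have h1 := Real.log_lt_sub_one_of_pos (div_pos (hπk_pos y0) (hπk1_pos y0)) hne1
    have h2 : Real.log (πk1 y0 / πk y0) = - Real.log (πk y0 / πk1 y0) := by
      rw [← Real.log_inv, inv_div]
    have h3 : πk1 y0 * (πk y0 / πk1 y0) = πk y0 := by rw [mul_div_assoc']; exact mul_div_cancel_left₀ _ (hπk1_pos y0).ne'
    rw [h2]
    nlinarith [mul_lt_mul_of_pos_left h1 (hπk1_pos y0)]
  have hsum0 : (∑ y, (πk1 y - πk y)) = 0 := by
    rw [Finset.sum_sub_distrib, hπk1_sum, hπk_sum, sub_self]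
  have hCpos : 0 < ∑ y, πk1 y * Real.log (πk1 y / πk y) := by
    rw [← hsum0]
    exact Finset.sum_lt_sum (fun y _ => hpt y) ⟨y0, Finset.mem_univ y0, hstrict⟩
  linarith [part1]
end

section
/- Let Y be a finite set, q a full-support probability mass function on Y, r : Y → ℝ with |r(y)| ≤ R for all y, and η ≥ 0. With q_η(y) ∝ q(y)·exp(η·r(y)), we have D_KL(q_η ‖ q) = ∫₀^η t·Var_{q_t}(r) dt ≤ (1/2)·η²·R². -/
theorem kl_tilt_integral_representation {Y : Type*} [Fintype Y] [Nonempty Y]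
    (q : Y → ℝ) (hq_pos : ∀ y, 0 < q y) (hq_sum : ∑ y, q y = 1)
    (r : Y → ℝ) (R : ℝ) (hr : ∀ y, |r y| ≤ R)
    (η : ℝ) (hη : 0 ≤ η)
    (tilt : ℝ → Y → ℝ)
    (htilt : ∀ t y, tilt t y = q y * Real.exp (t * r y) / (∑ z, q z * Real.exp (t * r z))) :
    (∑ y, tilt η y * Real.log (tilt η y / q y)) =
      (∫ t in (0:ℝ)..η, t * ∑ y, tilt t y * (r y - ∑ z, tilt t z * r z) ^ 2) ∧
    (∑ y, tilt η y * Real.log (tilt η y / q y)) ≤ 1 / 2 * η ^ 2 * R ^ 2 := by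
  classical
  set Z : ℝ → ℝ := fun t => ∑ y, q y * Real.exp (t * r y) with hZ
  set Z1 : ℝ → ℝ := fun t => ∑ y, q y * (Real.exp (t * r y) * r y) with hZ1
  set Z2 : ℝ → ℝ := fun t => ∑ y, q y * (Real.exp (t * r y) * r y * r y) with hZ2
  have hZpos : ∀ t, 0 < Z t := fun t =>
    Finset.sum_pos (fun y _ => mul_pos (hq_pos y) (Real.exp_pos _)) Finset.univ_nonempty
  have hZne : ∀ t, Z t ≠ 0 := fun t => (hZpos t).ne'
  -- derivatives
  have hZd : ∀ t, HasDerivAt Z (Z1 t) t := by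
    intro t
    apply HasDerivAt.fun_sum
    intro y _
    have h1 : HasDerivAt (fun t : ℝ => t * r y) (r y) t := by
      simpa using (hasDerivAt_id t).mul_const (r y)
    have h2 : HasDerivAt (fun t : ℝ => Real.exp (t * r y)) (Real.exp (t * r y) * r y) t :=
      h1.exp
    simpa [mul_assoc] using h2.const_mul (q y)
  have hZ1d : ∀ t, HasDerivAt Z1 (Z2 t) t := by
    intro t
    apply HasDerivAt.fun_sum
    intro y _
    have h1 : HasDerivAt (fun t : ℝ => t * r y) (r y) t := by
      simpa using (hasDerivAt_id t).mul_const (r y)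
    have h2 : HasDerivAt (fun t : ℝ => Real.exp (t * r y)) (Real.exp (t * r y) * r y) t :=
      h1.exp
    have h3 := (h2.mul_const (r y)).const_mul (q y)
    simpa [mul_assoc] using h3
  -- F
  set F : ℝ → ℝ := fun t => t * (Z1 t / Z t) - Real.log (Z t) with hF
  have hFd : ∀ t, HasDerivAt F (t * (Z2 t / Z t - (Z1 t / Z t) ^ 2)) t := by
    intro t
    have hg : HasDerivAt (fun t => Z1 t / Z t)
        ((Z2 t * Z t - Z1 t * Z1 t) / Z t ^ 2) t := (hZ1d t).div (hZd t) (hZne t)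
    have h1 : HasDerivAt (fun t => t * (Z1 t / Z t))
        (1 * (Z1 t / Z t) + t * ((Z2 t * Z t - Z1 t * Z1 t) / Z t ^ 2)) t :=
      (hasDerivAt_id t).mul hg
    have h2 : HasDerivAt (fun t => Real.log (Z t)) (Z1 t / Z t) t := (hZd t).log (hZne t)
    have h3 := h1.sub h2
    refine h3.congr_deriv ?_
    have := hZne t
    field_simp
    ring
  -- sums of tilt
  have hsum1 : ∀ t, ∑ y, tilt t y = 1 := by
    intro t
    simp only [htilt]
    rw [← Finset.sum_div]
    exact div_self (hZne t)
  have hsumr : ∀ t, ∑ y, tilt t y * r y = Z1 t / Z t := by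
    intro t
    simp only [htilt, div_mul_eq_mul_div]
    rw [hZ1, ← Finset.sum_div]
    congr 1
    apply Finset.sum_congr rfl
    intro y _
    ring
  have hsumr2 : ∀ t, ∑ y, tilt t y * r y ^ 2 = Z2 t / Z t := by
    intro t
    simp only [htilt, div_mul_eq_mul_div]
    rw [hZ2, ← Finset.sum_div]
    congr 1
    apply Finset.sum_congr rfl
    intro y _
    ring
  -- variance identity
  have hvar : ∀ t, ∑ y, tilt t y * (r y - ∑ z, tilt t z * r z) ^ 2
      = Z2 t / Z t - (Z1 t / Z t) ^ 2 := by
    intro t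
    rw [hsumr t]
    have expand : ∀ y, tilt t y * (r y - Z1 t / Z t) ^ 2
        = tilt t y * r y ^ 2 - 2 * (Z1 t / Z t) * (tilt t y * r y)
          + (Z1 t / Z t) ^ 2 * tilt t y := by intro y; ring
    simp only [expand]
    rw [Finset.sum_add_distrib, Finset.sum_sub_distrib, ← Finset.mul_sum, ← Finset.mul_sum,
      hsumr t, hsumr2 t, hsum1 t]
    ring
  -- integrand equality
  have hinteq : (fun t => t * ∑ y, tilt t y * (r y - ∑ z, tilt t z * r z) ^ 2)
      = fun t => t * (Z2 t / Z t - (Z1 t / Z t) ^ 2) := by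
    funext t; rw [hvar t]
  -- continuity
  have hZc : Continuous Z := by
    apply continuous_finset_sum
    intro y _
    exact continuous_const.mul ((continuous_id.mul continuous_const).rexp)
  have hZ1c : Continuous Z1 := by
    apply continuous_finset_sum
    intro y _
    exact continuous_const.mul (((continuous_id.mul continuous_const).rexp).mul continuous_const)
  have hZ2c : Continuous Z2 := by
    apply continuous_finset_sum
    intro y _
    exact continuous_const.mul ((((continuous_id.mul continuous_const).rexp).mul
      continuous_const).mul continuous_const)
  have hcont : Continuous fun t => t * (Z2 t / Z t - (Z1 t / Z t) ^ 2) := by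
    apply continuous_id.mul
    exact (hZ2c.div hZc hZne).sub ((hZ1c.div hZc hZne).pow 2)
  -- FTC
  have hFTC : (∫ t in (0:ℝ)..η, t * (Z2 t / Z t - (Z1 t / Z t) ^ 2)) = F η - F 0 :=
    intervalIntegral.integral_eq_sub_of_hasDerivAt (fun t _ => hFd t)
      (hcont.intervalIntegrable 0 η)
  have hZ0 : Z 0 = 1 := by
    simp [hZ, hq_sum]
  have hF0 : F 0 = 0 := by
    simp [hF, hZ0]
  -- KL = F η
  have hKL : (∑ y, tilt η y * Real.log (tilt η y / q y)) = F η := by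
    have hlog : ∀ y, Real.log (tilt η y / q y) = η * r y - Real.log (Z η) := by
      intro y
      have : tilt η y / q y = Real.exp (η * r y) / Z η := by
        have hqne := (hq_pos y).ne'
        rw [htilt]
        field_simp
        rfl
      rw [this, Real.log_div (Real.exp_ne_zero _) (hZne η), Real.log_exp]
    calc ∑ y, tilt η y * Real.log (tilt η y / q y)
        = ∑ y, (η * (tilt η y * r y) - Real.log (Z η) * tilt η y) := by
          apply Finset.sum_congr rfl
          intro y _
          rw [hlog y]; ring
      _ = η * (Z1 η / Z η) - Real.log (Z η) := by
          rw [Finset.sum_sub_distrib, ← Finset.mul_sum, ← Finset.mul_sum, hsumr η, hsum1 η,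
            mul_one]
      _ = F η := rfl
  have heq : (∑ y, tilt η y * Real.log (tilt η y / q y)) =
      ∫ t in (0:ℝ)..η, t * ∑ y, tilt t y * (r y - ∑ z, tilt t z * r z) ^ 2 := by
    rw [hKL]
    rw [show (∫ t in (0:ℝ)..η, t * ∑ y, tilt t y * (r y - ∑ z, tilt t z * r z) ^ 2)
        = ∫ t in (0:ℝ)..η, t * (Z2 t / Z t - (Z1 t / Z t) ^ 2) from by rw [hinteq]]
    rw [hFTC, hF0, sub_zero]
  refine ⟨heq, ?_⟩
  rw [heq]
  -- bound
  have htilt_nonneg : ∀ t y, 0 ≤ tilt t y := by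
    intro t y
    rw [htilt]
    exact div_nonneg (mul_nonneg (hq_pos y).le (Real.exp_pos _).le) (hZpos t).le
  have hvar_le : ∀ t, (∑ y, tilt t y * (r y - ∑ z, tilt t z * r z) ^ 2) ≤ R ^ 2 := by
    intro t
    rw [hvar t]
    have h1 : Z2 t / Z t ≤ R ^ 2 := by
      rw [← hsumr2 t]
      calc ∑ y, tilt t y * r y ^ 2 ≤ ∑ y, tilt t y * R ^ 2 := by
            apply Finset.sum_le_sum
            intro y _
            apply mul_le_mul_of_nonneg_left _ (htilt_nonneg t y)
            calc r y ^ 2 = |r y| ^ 2 := (sq_abs _).symm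
              _ ≤ R ^ 2 := by
                  apply pow_le_pow_left₀ (abs_nonneg _) (hr y) 2
        _ = R ^ 2 := by rw [← Finset.sum_mul, hsum1 t, one_mul]
    nlinarith [sq_nonneg (Z1 t / Z t)]
  have hib : (∫ t in (0:ℝ)..η, t * ∑ y, tilt t y * (r y - ∑ z, tilt t z * r z) ^ 2)
      ≤ ∫ t in (0:ℝ)..η, t * R ^ 2 := by
    apply intervalIntegral.integral_mono_on hη
    · rw [hinteq]; exact hcont.intervalIntegrable 0 η
    · exact (continuous_id.mul continuous_const).intervalIntegrable 0 η
    · intro t ht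
      have ht0 : 0 ≤ t := ht.1
      exact mul_le_mul_of_nonneg_left (hvar_le t) ht0
  calc (∫ t in (0:ℝ)..η, t * ∑ y, tilt t y * (r y - ∑ z, tilt t z * r z) ^ 2)
      ≤ ∫ t in (0:ℝ)..η, t * R ^ 2 := hib
    _ = 1 / 2 * η ^ 2 * R ^ 2 := by
        rw [intervalIntegral.integral_mul_const, integral_id]
        ring
end
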